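/- On ℤⁿ, suppose V(x) ≥ c₀(1+|x|)^{−α} for all x, with α ∈ [0,2) and c₀ > 0. Then for 0 < β < (2−α)/2 and K > 0 sufficiently small, Z(x) := −K|x|^{2β} − 1 satisfies ΔZ(x) ≥ −V(x) for all x ∈ ℤⁿ, Z is bounded above, and Z(x) → −∞ as |x| → ∞. Consequently (by the Phragmén–Lindelöf principle), any u with Δu − Vu ≥ 0 on ℤⁿ and limsup_{|x|→∞} u(x)/|x|^{2−α} ≤ 0 satisfies u ≤ 0 on ℤⁿ. -/

import Mathlib

open scoped Classical

/-- Adjacency in the integer lattice `ℤⁿ`: `y` differs from `x` in exactly one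
coordinate, by `±1`. -/
def latAdj {n : ℕ} (x y : Fin n → ℤ) : Prop :=
  ∃ k, (y k = x k + 1 ∨ y k = x k - 1) ∧ ∀ i, i ≠ k → y i = x i

/-- The standard edge weight on `ℤⁿ`: `1` on edges, `0` otherwise. -/
noncomputable def latw {n : ℕ} (x y : Fin n → ℤ) : ℝ := if latAdj x y then 1 else 0

/-- `|x|²`, the squared euclidean norm of a lattice point. -/
noncomputable def nsq {n : ℕ} (x : Fin n → ℤ) : ℝ := ∑ k, ((x k : ℝ))^2

/-- `|x|`, the euclidean norm of a lattice point. -/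
noncomputable def nrm {n : ℕ} (x : Fin n → ℤ) : ℝ := Real.sqrt (nsq x)

/-- The graph Laplacian on `ℤⁿ` with node measure `μ ≡ 2n`:
`Δf(x) = (1/2n) Σ_{y∼x} (f(y) - f(x))`. -/
noncomputable def latLap {n : ℕ} (f : (Fin n → ℤ) → ℝ) (x : Fin n → ℤ) : ℝ :=
  (1 / (2 * (n : ℝ))) * ∑' y, latw x y * (f y - f x)

namespace Stmt19Aux

def eps : Bool → ℤ
  | true => 1
  | false => -1

def nbr {n : ℕ} (x : Fin n → ℤ) (p : Fin n × Bool) : Fin n → ℤ :=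
  Function.update x p.1 (x p.1 + eps p.2)

lemma nsq_nonneg {n : ℕ} (x : Fin n → ℤ) : 0 ≤ nsq x :=
  Finset.sum_nonneg fun _ _ => sq_nonneg _

lemma nrm_nonneg {n : ℕ} (x : Fin n → ℤ) : 0 ≤ nrm x := Real.sqrt_nonneg _

lemma nsq_update {n : ℕ} (x : Fin n → ℤ) (k : Fin n) (v : ℤ) :
    nsq (Function.update x k v) = nsq x - ((x k : ℝ))^2 + ((v:ℝ))^2 := by
  unfold nsq
  have h : ∀ j, ((Function.update x k v j : ℤ) : ℝ)^2
      = Function.update (fun j => ((x j : ℝ))^2) k ((v:ℝ)^2) j := by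
    intro j
    by_cases hj : j = k
    · subst hj; simp
    · simp [Function.update_of_ne hj]
  rw [Finset.sum_congr rfl (fun j _ => h j),
    Finset.sum_update_of_mem (Finset.mem_univ k),
    Finset.sum_eq_sum_sdiff_singleton_add (Finset.mem_univ k) (fun j => ((x j:ℝ))^2)]
  ring

lemma nsq_nbr_true {n : ℕ} (x : Fin n → ℤ) (k : Fin n) :
    nsq (nbr x (k, true)) = nsq x + (2*(x k:ℝ)+1) := by
  unfold nbr eps
  rw [nsq_update]
  push_cast
  ring

lemma nsq_nbr_false {n : ℕ} (x : Fin n → ℤ) (k : Fin n) :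
    nsq (nbr x (k, false)) = nsq x + (-(2*(x k:ℝ))+1) := by
  unfold nbr eps
  rw [nsq_update]
  push_cast
  ring

lemma latAdj_nbr {n : ℕ} (x : Fin n → ℤ) (p : Fin n × Bool) : latAdj x (nbr x p) := by
  refine ⟨p.1, ?_, fun i hi => Function.update_of_ne hi _ _⟩
  rcases p with ⟨k, b⟩
  cases b
  · right; simp [nbr, eps]; ring
  · left; simp [nbr, eps]

lemma latAdj_mem {n : ℕ} {x y : Fin n → ℤ} (h : latAdj x y) : ∃ p, y = nbr x p := by
  obtain ⟨k, hk, ho⟩ := h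
  rcases hk with h1 | h1
  · refine ⟨(k, true), funext fun i => ?_⟩
    by_cases hi : i = k
    · subst hi; simp [nbr, eps, h1]
    · simp [nbr, eps, Function.update_of_ne hi, ho i hi]
  · refine ⟨(k, false), funext fun i => ?_⟩
    by_cases hi : i = k
    · subst hi; simp [nbr, eps, h1]; ring
    · simp [nbr, eps, Function.update_of_ne hi, ho i hi]

lemma nbr_injOn {n : ℕ} (x : Fin n → ℤ) :
    ∀ p ∈ (Finset.univ : Finset (Fin n × Bool)), ∀ q ∈ (Finset.univ : Finset (Fin n × Bool)),
      nbr x p = nbr x q → p = q := by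
  rintro ⟨k, b⟩ - ⟨l, c⟩ - h
  by_cases hkl : k = l
  · subst hkl
    have h2 := congrFun h k
    simp only [nbr, Function.update_self] at h2
    cases b <;> cases c <;> simp [eps] at h2 ⊢
  · have h2 := congrFun h k
    simp only [nbr] at h2
    rw [Function.update_self, Function.update_of_ne hkl] at h2
    cases b <;> simp [eps] at h2

lemma latLap_eq {n : ℕ} (f : (Fin n → ℤ) → ℝ) (x : Fin n → ℤ) :
    latLap f x = (1 / (2 * (n:ℝ))) * ∑ p : Fin n × Bool, (f (nbr x p) - f x) := by
  unfold latLap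
  congr 1
  have h0 : ∀ y ∉ Finset.image (nbr x) Finset.univ, latw x y * (f y - f x) = 0 := by
    intro y hy
    have hA : ¬ latAdj x y := by
      intro h
      obtain ⟨p, rfl⟩ := latAdj_mem h
      exact hy (Finset.mem_image_of_mem _ (Finset.mem_univ p))
    simp [latw, hA]
  rw [tsum_eq_sum h0, Finset.sum_image (nbr_injOn x)]
  exact Finset.sum_congr rfl fun p _ => by simp [latw, latAdj_nbr x p]


lemma one_le_nsq {n : ℕ} {x : Fin n → ℤ} (hx : x ≠ 0) : 1 ≤ nsq x := by
  obtain ⟨k, hk⟩ := Function.ne_iff.mp hx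
  have hk' : x k ≠ 0 := by simpa using hk
  have h2 : (1:ℝ) ≤ |(x k : ℝ)| := by
    rw [← Int.cast_abs]
    exact_mod_cast Int.one_le_abs hk'
  have h1 : (1:ℝ) ≤ ((x k : ℝ))^2 := by nlinarith [sq_abs ((x k : ℝ))]
  calc (1:ℝ) ≤ ((x k:ℝ))^2 := h1
    _ ≤ nsq x := by
        unfold nsq
        exact Finset.single_le_sum (f := fun j => ((x j:ℝ))^2)
          (fun j _ => sq_nonneg _) (Finset.mem_univ k)

lemma nsq_zero {n : ℕ} : nsq (0 : Fin n → ℤ) = 0 := by simp [nsq]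

lemma nrm_zero {n : ℕ} : nrm (0 : Fin n → ℤ) = 0 := by simp [nrm, nsq_zero]

lemma one_le_nrm {n : ℕ} {x : Fin n → ℤ} (hx : x ≠ 0) : 1 ≤ nrm x := by
  rw [nrm]
  calc (1:ℝ) = Real.sqrt 1 := Real.sqrt_one.symm
    _ ≤ Real.sqrt (nsq x) := Real.sqrt_le_sqrt (one_le_nsq hx)

lemma nrm_rpow {n : ℕ} (y : Fin n → ℤ) (β : ℝ) : nrm y ^ (2*β) = nsq y ^ β := by
  rw [nrm, Real.sqrt_eq_rpow, ← Real.rpow_mul (nsq_nonneg y)]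
  congr 1; ring

lemma bern {β S h : ℝ} (hβ0 : 0 ≤ β) (hβ1 : β ≤ 1) (hS : 0 < S) (hSh : 0 ≤ S + h) :
    (S + h) ^ β ≤ S ^ β + β * h * S ^ (β - 1) := by
  have hs : -1 ≤ h / S := by
    rw [neg_le, ← neg_div]
    exact div_le_one_of_le₀ (by linarith) hS.le
  have h1S : 0 ≤ 1 + h / S := by
    have he : 1 + h / S = (S + h)/S := by field_simp
    rw [he]; exact div_nonneg hSh hS.le
  have hB := rpow_one_add_le_one_add_mul_self hs hβ0 hβ1
  have key : S + h = S * (1 + h / S) := by field_simp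
  calc (S + h) ^ β = S ^ β * (1 + h / S) ^ β := by
        rw [key, Real.mul_rpow hS.le h1S]
    _ ≤ S ^ β * (1 + β * (h / S)) :=
        mul_le_mul_of_nonneg_left hB (Real.rpow_nonneg hS.le β)
    _ = S ^ β + β * h * S ^ (β - 1) := by
        rw [Real.rpow_sub hS, Real.rpow_one]
        field_simp

lemma latLap_comb {n : ℕ} (f : (Fin n → ℤ) → ℝ) (a c : ℝ) (x : Fin n → ℤ) :
    latLap (fun y => a * f y + c) x = a * latLap f x := by
  rw [latLap_eq, latLap_eq]
  have he : ∑ p : Fin n × Bool, ((a * f (nbr x p) + c) - (a * f x + c))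
      = a * ∑ p : Fin n × Bool, (f (nbr x p) - f x) := by
    rw [Finset.mul_sum]
    exact Finset.sum_congr rfl fun p _ => by ring
  rw [he]; ring

lemma latLap_sub {n : ℕ} (f g : (Fin n → ℤ) → ℝ) (a : ℝ) (x : Fin n → ℤ) :
    latLap (fun y => f y - a * g y) x = latLap f x - a * latLap g x := by
  rw [latLap_eq, latLap_eq, latLap_eq]
  have he : ∑ p : Fin n × Bool, ((f (nbr x p) - a * g (nbr x p)) - (f x - a * g x))
      = ∑ p : Fin n × Bool, (f (nbr x p) - f x)
        - a * ∑ p : Fin n × Bool, (g (nbr x p) - g x) := by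
    rw [Finset.mul_sum, ← Finset.sum_sub_distrib]
    exact Finset.sum_congr rfl fun p _ => by ring
  rw [he]; ring

lemma lapP_le {n : ℕ} (hn : 0 < n) {β : ℝ} (hβ0 : 0 < β) (hβ1 : β ≤ 1) {x : Fin n → ℤ}
    (hx : x ≠ 0) :
    latLap (fun y => nsq y ^ β) x ≤ β * nsq x ^ (β - 1) := by
  have hS : 0 < nsq x := lt_of_lt_of_le one_pos (one_le_nsq hx)
  rw [latLap_eq]
  have hsum : ∑ p : Fin n × Bool, (nsq (nbr x p) ^ β - nsq x ^ β)
      ≤ (2*(n:ℝ)) * (β * nsq x ^ (β-1)) := by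
    rw [Fintype.sum_prod_type]
    have hk : ∀ k : Fin n, ∑ b : Bool, (nsq (nbr x (k, b)) ^ β - nsq x ^ β)
        ≤ 2 * (β * nsq x ^ (β-1)) := by
      intro k
      rw [Fintype.sum_bool]
      have e1 := nsq_nbr_true x k
      have e2 := nsq_nbr_false x k
      have p1 : (0:ℝ) ≤ nsq x + (2*(x k:ℝ)+1) := e1 ▸ nsq_nonneg _
      have p2 : (0:ℝ) ≤ nsq x + (-(2*(x k:ℝ))+1) := e2 ▸ nsq_nonneg _
      have ht := bern hβ0.le hβ1 hS p1
      have hf := bern hβ0.le hβ1 hS p2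
      rw [e1, e2]
      ring_nf at ht hf ⊢
      linarith
    calc ∑ k : Fin n, ∑ b : Bool, (nsq (nbr x (k, b)) ^ β - nsq x ^ β)
        ≤ ∑ _k : Fin n, 2 * (β * nsq x ^ (β-1)) := Finset.sum_le_sum fun k _ => hk k
      _ = (2*(n:ℝ)) * (β * nsq x ^ (β-1)) := by
          rw [Finset.sum_const, Finset.card_univ, Fintype.card_fin, nsmul_eq_mul]; ring
  have h2n : (0:ℝ) ≤ 1/(2*(n:ℝ)) := by positivity
  calc (1/(2*(n:ℝ))) * ∑ p : Fin n × Bool, (nsq (nbr x p) ^ β - nsq x ^ β)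
      ≤ (1/(2*(n:ℝ))) * ((2*(n:ℝ)) * (β * nsq x ^ (β-1))) :=
        mul_le_mul_of_nonneg_left hsum h2n
    _ = β * nsq x ^ (β-1) := by
        have : (n:ℝ) ≠ 0 := Nat.cast_ne_zero.mpr hn.ne'
        field_simp

lemma lapP_zero {n : ℕ} (hn : 0 < n) {β : ℝ} (hβ0 : 0 < β) :
    latLap (fun y => nsq y ^ β) (0 : Fin n → ℤ) ≤ 1 := by
  rw [latLap_eq]
  have hterm : ∀ p : Fin n × Bool,
      nsq (nbr (0 : Fin n → ℤ) p) ^ β - nsq (0 : Fin n → ℤ) ^ β = 1 := by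
    rintro ⟨k, b⟩
    have h1 : nsq (nbr (0 : Fin n → ℤ) (k, b)) = 1 := by
      cases b
      · rw [nsq_nbr_false]; simp [nsq_zero]
      · rw [nsq_nbr_true]; simp [nsq_zero]
    rw [h1, nsq_zero, Real.one_rpow, Real.zero_rpow hβ0.ne']
    ring
  rw [Finset.sum_congr rfl fun p _ => hterm p]
  rw [Finset.sum_const, Finset.card_univ]
  have : (n:ℝ) ≠ 0 := Nat.cast_ne_zero.mpr hn.ne'
  simp [Fintype.card_prod, Fintype.card_fin]
  have hn' : (0:ℝ) < (n:ℝ) := by exact_mod_cast hn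
  rw [inv_mul_eq_div, div_mul_eq_mul_div, div_le_one hn']
  linarith

lemma Vlb {n : ℕ} {α : ℝ} (hα : 0 ≤ α) (hα2 : α < 2) {x : Fin n → ℤ} (hx : x ≠ 0) :
    (1/4) * (nsq x) ^ (-(α/2)) ≤ (1 + nrm x) ^ (-α) := by
  have hr1 : 1 ≤ nrm x := one_le_nrm hx
  have hrpos : 0 < nrm x := lt_of_lt_of_le one_pos hr1
  have h1r : 0 < 1 + nrm x := by linarith
  have h2r : 1 + nrm x ≤ 2 * nrm x := by linarith
  have e0 : nrm x ^ (-α) = (nsq x) ^ (-(α/2)) := by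
    rw [nrm, Real.sqrt_eq_rpow, ← Real.rpow_mul (nsq_nonneg x)]
    congr 1; ring
  have e2 : (2 * nrm x) ^ (-α) ≤ (1 + nrm x) ^ (-α) := by
    rw [Real.rpow_neg (by positivity), Real.rpow_neg h1r.le]
    have h1 : (1 + nrm x) ^ α ≤ (2 * nrm x) ^ α := Real.rpow_le_rpow h1r.le h2r hα
    have h2 : 0 < (1 + nrm x) ^ α := Real.rpow_pos_of_pos h1r α
    exact inv_anti₀ h2 h1
  have e1 : (2 * nrm x) ^ (-α) = 2 ^ (-α) * nrm x ^ (-α) :=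
    Real.mul_rpow (by norm_num) hrpos.le
  have e3 : (1/4 : ℝ) ≤ 2 ^ (-α) := by
    have hc : (2:ℝ) ^ (-2 : ℝ) ≤ 2 ^ (-α) :=
      Real.rpow_le_rpow_of_exponent_le one_le_two (by linarith)
    have h4 : (2:ℝ) ^ (-2:ℝ) = 1/4 := by
      rw [show (-2:ℝ) = ((-2 : ℤ) : ℝ) by norm_num, Real.rpow_intCast]
      norm_num
    rw [h4] at hc
    linarith
  have hrn : 0 ≤ nrm x ^ (-α) := Real.rpow_nonneg hrpos.le _
  calc (1/4) * nsq x ^ (-(α/2)) = (1/4) * nrm x ^ (-α) := by rw [e0]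
    _ ≤ 2 ^ (-α) * nrm x ^ (-α) := mul_le_mul_of_nonneg_right e3 hrn
    _ = (2*nrm x)^(-α) := e1.symm
    _ ≤ _ := e2

end Stmt19Aux


open Stmt19Aux

/-- on `ℤⁿ` with `V(x) ≥ c₀ (1+|x|)^{-α}`, `α ∈ [0,2)`: for `0 < β < (2-α)/2`
and `K > 0` small enough, `Z(x) = -K|x|^{2β} - 1` satisfies `ΔZ ≥ -V` on `ℤⁿ`, is bounded
above, and tends to `-∞`; consequently any `u` with `Δu - Vu ≥ 0` and
`limsup_{|x|→∞} u(x)/|x|^{2-α} ≤ 0` satisfies `u ≤ 0` on `ℤⁿ`. -/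
theorem stmt19 {n : ℕ} (hn : 0 < n) (V : (Fin n → ℤ) → ℝ) (c₀ α : ℝ)
    (hc₀ : 0 < c₀) (hα : 0 ≤ α) (hα2 : α < 2)
    (hV : ∀ x, c₀ * (1 + nrm x) ^ (-α) ≤ V x) :
    (∀ β : ℝ, 0 < β → β < (2 - α) / 2 →
      ∃ K₀ : ℝ, 0 < K₀ ∧ ∀ K : ℝ, 0 < K → K ≤ K₀ →
        (∀ x : Fin n → ℤ, latLap (fun y => -K * nrm y ^ (2 * β) - 1) x ≥ -V x) ∧
        (∃ Hb : ℝ, ∀ x : Fin n → ℤ, -K * nrm x ^ (2 * β) - 1 ≤ Hb) ∧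
        (∀ C : ℝ, ∃ R : ℝ, ∀ x : Fin n → ℤ, R ≤ nrm x → -K * nrm x ^ (2 * β) - 1 ≤ C)) ∧
    (∀ u : (Fin n → ℤ) → ℝ,
      (∀ x, latLap u x - V x * u x ≥ 0) →
      (∀ ε : ℝ, 0 < ε → ∃ R : ℝ, ∀ x, R ≤ nrm x → u x ≤ ε * nrm x ^ (2 - α)) →
      ∀ x, u x ≤ 0) := by
  have hV0 : c₀ ≤ V 0 := by
    have h := hV 0
    rw [nrm_zero] at h
    simpa [Real.one_rpow] using h
  have hVpos : ∀ y, 0 < V y := by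
    intro y
    refine lt_of_lt_of_le ?_ (hV y)
    have : 0 < 1 + nrm y := by linarith [nrm_nonneg y]
    positivity
  constructor
  · -- Part 1
    intro β hβ0 hβlt
    have hβ1 : β ≤ 1 := by linarith
    refine ⟨min c₀ (c₀/(4*β)), lt_min hc₀ (by positivity), ?_⟩
    intro K hK hKle
    have hKc : K ≤ c₀ := le_trans hKle (min_le_left _ _)
    have hKb : K * β ≤ c₀ / 4 := by
      have h1 : K ≤ c₀/(4*β) := le_trans hKle (min_le_right _ _)
      have := mul_le_mul_of_nonneg_right h1 hβ0.le
      calc K * β ≤ c₀/(4*β) * β := this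
        _ = c₀ / 4 := by field_simp
    have hfun : (fun y : Fin n → ℤ => -K * nrm y ^ (2*β) - 1)
        = (fun y => (-K) * (nsq y ^ β) + (-1)) := by
      funext y; rw [nrm_rpow]; ring
    refine ⟨?_, ⟨0, ?_⟩, ?_⟩
    · -- (a) supersolution property  ΔZ ≥ -V
      intro x
      rw [hfun, latLap_comb]
      by_cases hx : x = (0 : Fin n → ℤ)
      · subst hx
        have h1 : latLap (fun y => nsq y ^ β) (0 : Fin n → ℤ) ≤ 1 := lapP_zero hn hβ0
        have h2 : (-K) * 1 ≤ (-K) * latLap (fun y => nsq y ^ β) (0 : Fin n → ℤ) :=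
          mul_le_mul_of_nonpos_left h1 (by linarith)
        have : -V 0 ≤ -c₀ := by linarith
        calc -V 0 ≤ -c₀ := this
          _ ≤ (-K) * 1 := by linarith
          _ ≤ _ := h2
      · have hS1 : 1 ≤ nsq x := one_le_nsq hx
        have hS : 0 < nsq x := lt_of_lt_of_le one_pos hS1
        have h1 : latLap (fun y => nsq y ^ β) x ≤ β * nsq x ^ (β - 1) := lapP_le hn hβ0 hβ1 hx
        have h2 : (-K) * (β * nsq x ^ (β-1)) ≤ (-K) * latLap (fun y => nsq y ^ β) x :=
          mul_le_mul_of_nonpos_left h1 (by linarith)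
        have hE : nsq x ^ (β-1) ≤ nsq x ^ (-(α/2)) :=
          Real.rpow_le_rpow_of_exponent_le hS1 (by linarith)
        have hVl := Vlb hα hα2 hx
        have hc : K * (β * nsq x ^ (β-1)) ≤ c₀ * (1 + nrm x) ^ (-α) := by
          have hp1 : (0:ℝ) ≤ nsq x ^ (β-1) := Real.rpow_nonneg hS.le _
          have hm : K * β * nsq x ^ (β-1) ≤ (c₀/4) * nsq x ^ (-(α/2)) :=
            mul_le_mul hKb hE hp1 (by positivity)
          have hm2 : c₀ * ((1/4) * nsq x ^ (-(α/2))) ≤ c₀ * (1 + nrm x) ^ (-α) :=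
            mul_le_mul_of_nonneg_left hVl hc₀.le
          nlinarith [hm, hm2]
        have := hV x
        nlinarith [h2, hc]
    · -- (b) bounded above
      intro x
      have h := Real.rpow_nonneg (nrm_nonneg x) (2*β)
      nlinarith [h]
    · -- (c) tends to -∞
      intro C
      set M : ℝ := max 0 (-1 - C) with hM
      have hM0 : 0 ≤ M := le_max_left _ _
      refine ⟨(M/K) ^ (1/(2*β)), ?_⟩
      intro x hRx
      have h0 : 0 ≤ M/K := div_nonneg hM0 hK.le
      have h2β : (0:ℝ) < 2*β := by linarith
      have e : ((M/K) ^ (1/(2*β))) ^ (2*β) = M/K := by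
        rw [← Real.rpow_mul h0, one_div, inv_mul_cancel₀ h2β.ne', Real.rpow_one]
      have hmono : ((M/K) ^ (1/(2*β))) ^ (2*β) ≤ nrm x ^ (2*β) :=
        Real.rpow_le_rpow (Real.rpow_nonneg h0 _) hRx h2β.le
      rw [e] at hmono
      have : M ≤ K * nrm x ^ (2*β) := by
        rw [div_le_iff₀ hK] at hmono
        linarith [hmono]
      have hMC : -1 - C ≤ M := le_max_right _ _
      linarith
  · -- Part 2
    intro u hu hgrow
    have hβ'0 : 0 < (2-α)/2 := by linarith
    have hβ'1 : (2-α)/2 ≤ 1 := by linarith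
    set β' : ℝ := (2-α)/2 with hβ'def
    set B : ℝ := (4*β' + 1)/c₀ with hBdef
    have hBpos : 0 < B := by positivity
    set ψ : (Fin n → ℤ) → ℝ := fun y => nsq y ^ β' + B with hψdef
    have hψpos : ∀ y, 0 < ψ y := by
      intro y
      have := Real.rpow_nonneg (nsq_nonneg y) β'
      simp only [hψdef]
      linarith
    have hψB : ∀ y, B ≤ ψ y := by
      intro y
      have := Real.rpow_nonneg (nsq_nonneg y) β'
      simp only [hψdef]
      linarith
    have hcB : c₀ * B = 4*β' + 1 := by
      rw [hBdef]; field_simp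
    have hlψ : ∀ x, latLap ψ x = latLap (fun y => nsq y ^ β') x := by
      intro x
      have he : ψ = fun y => 1 * (nsq y ^ β') + B := by
        funext y; simp only [hψdef]; ring
      rw [he, latLap_comb]; ring
    have hsup : ∀ x, latLap ψ x ≤ V x * ψ x := by
      intro x
      rw [hlψ]
      by_cases hx : x = (0 : Fin n → ℤ)
      · subst hx
        have h1 : latLap (fun y => nsq y ^ β') (0 : Fin n → ℤ) ≤ 1 := lapP_zero hn hβ'0
        have hψ0 : ψ 0 = B := by
          simp only [hψdef, nsq_zero, Real.zero_rpow hβ'0.ne']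
          ring
        rw [hψ0]
        have : c₀ * B ≤ V 0 * B := mul_le_mul_of_nonneg_right hV0 hBpos.le
        rw [hcB] at this
        linarith
      · have hS1 : 1 ≤ nsq x := one_le_nsq hx
        have hS : 0 < nsq x := lt_of_lt_of_le one_pos hS1
        have h1 : latLap (fun y => nsq y ^ β') x ≤ β' * nsq x ^ (β' - 1) :=
          lapP_le hn hβ'0 hβ'1 hx
        have he : nsq x ^ (β' - 1) = nsq x ^ (-(α/2)) := by
          congr 1; rw [hβ'def]; ring
        rw [he] at h1
        have hVl := Vlb hα hα2 hx
        have hS' : 0 < nsq x ^ (-(α/2)) := Real.rpow_pos_of_pos hS _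
        -- V x * ψ x ≥ c₀(1+r)^{-α} ψ x ≥ c₀ (1/4) S' ψ x ≥ (c₀/4) S' B = ((4β'+1)/4) S' ≥ β' S'
        have s1 : c₀ * (1 + nrm x) ^ (-α) * ψ x ≤ V x * ψ x :=
          mul_le_mul_of_nonneg_right (hV x) (hψpos x).le
        have s2 : c₀ * ((1/4) * nsq x ^ (-(α/2))) * ψ x ≤ c₀ * (1 + nrm x) ^ (-α) * ψ x :=
          mul_le_mul_of_nonneg_right (mul_le_mul_of_nonneg_left hVl hc₀.le) (hψpos x).le
        have s3 : c₀ * ((1/4) * nsq x ^ (-(α/2))) * B ≤ c₀ * ((1/4) * nsq x ^ (-(α/2))) * ψ x :=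
          mul_le_mul_of_nonneg_left (hψB x) (by positivity)
        have s4 : c₀ * ((1/4) * nsq x ^ (-(α/2))) * B = ((4*β'+1)/4) * nsq x ^ (-(α/2)) := by
          have : c₀ * ((1/4) * nsq x ^ (-(α/2))) * B = (c₀ * B) * ((1/4) * nsq x ^ (-(α/2))) := by
            ring
          rw [this, hcB]; ring
        have s5 : β' * nsq x ^ (-(α/2)) ≤ ((4*β'+1)/4) * nsq x ^ (-(α/2)) := by
          apply mul_le_mul_of_nonneg_right _ hS'.le
          linarith
        calc latLap (fun y => nsq y ^ β') x ≤ β' * nsq x ^ (-(α/2)) := h1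
          _ ≤ (4*β'+1)/4 * nsq x ^ (-(α/2)) := s5
          _ = c₀ * (1/4 * nsq x ^ (-(α/2))) * B := s4.symm
          _ ≤ c₀ * (1/4 * nsq x ^ (-(α/2))) * ψ x := s3
          _ ≤ c₀ * (1 + nrm x) ^ (-α) * ψ x := s2
          _ ≤ V x * ψ x := s1
    have key : ∀ ε : ℝ, 0 < ε → ∀ x, u x ≤ ε * ψ x := by
      intro ε hε
      obtain ⟨R, hR⟩ := hgrow ε hε
      set R' : ℝ := max R 1 with hR'def
      have hR'1 : (1:ℝ) ≤ R' := le_max_right _ _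
      set m : ℤ := ⌈R'⌉ with hmdef
      set F : Finset (Fin n → ℤ) := Fintype.piFinset (fun _ : Fin n => Finset.Icc (-m) m)
        with hFdef
      have hmemF : ∀ y : Fin n → ℤ, nrm y ≤ R' → y ∈ F := by
        intro y hy
        rw [hFdef, Fintype.mem_piFinset]
        intro k
        rw [Finset.mem_Icc]
        have h1 : ((y k:ℝ))^2 ≤ nsq y := by
          unfold nsq
          exact Finset.single_le_sum (f := fun j => ((y j:ℝ))^2)
            (fun j _ => sq_nonneg _) (Finset.mem_univ k)
        have h2 : |(y k : ℝ)| ≤ nrm y := by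
          rw [← Real.sqrt_sq_eq_abs, nrm]
          exact Real.sqrt_le_sqrt h1
        have h3 : |(y k : ℝ)| ≤ (m:ℝ) := le_trans (le_trans h2 hy) (Int.le_ceil R')
        have h4 : |y k| ≤ m := by
          rwa [← Int.cast_abs, Int.cast_le] at h3
        exact abs_le.mp h4
      have hFne : F.Nonempty := by
        refine ⟨0, hmemF 0 ?_⟩
        rw [nrm_zero]
        linarith
      obtain ⟨xs, hxsF, hxsmax⟩ := F.exists_max_image (fun y => u y - ε * ψ y) hFne
      have hout : ∀ y, y ∉ F → u y - ε * ψ y ≤ -(ε*B) := by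
        intro y hy
        have hls : R' ≤ nrm y := by
          by_contra h
          push_neg at h
          exact hy (hmemF y h.le)
        have h1 : u y ≤ ε * nrm y ^ (2-α) := hR y (le_trans (le_max_left R 1) hls)
        have e2 : nrm y ^ (2-α) = nsq y ^ β' := by
          have : (2 - α) = 2 * β' := by rw [hβ'def]; ring
          rw [this, nrm_rpow]
        rw [e2] at h1
        simp only [hψdef]
        linarith
      by_cases hcase : -(ε*B) ≤ u xs - ε * ψ xs
      · have hgm : ∀ y, u y - ε * ψ y ≤ u xs - ε * ψ xs := by
          intro y
          by_cases hyF : y ∈ F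
          · exact hxsmax y hyF
          · linarith [hout y hyF]
        have hlap : latLap (fun y => u y - ε * ψ y) xs ≤ 0 := by
          rw [latLap_eq]
          have hs : ∑ p : Fin n × Bool,
              ((fun y => u y - ε * ψ y) (nbr xs p) - (fun y => u y - ε * ψ y) xs) ≤ 0 :=
            Finset.sum_nonpos fun p _ => by simpa using sub_nonpos.mpr (hgm (nbr xs p))
          have h2n : (0:ℝ) ≤ 1/(2*(n:ℝ)) := by positivity
          have := mul_le_mul_of_nonneg_left hs h2n
          simpa using this
        rw [latLap_sub u ψ ε xs] at hlap
        have h1 : V xs * u xs ≤ latLap u xs := by linarith [hu xs]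
        have h2 : ε * latLap ψ xs ≤ ε * (V xs * ψ xs) :=
          mul_le_mul_of_nonneg_left (hsup xs) hε.le
        have h3 : V xs * (u xs - ε * ψ xs) ≤ 0 := by nlinarith [h1, h2, hlap]
        have hws : u xs - ε * ψ xs ≤ 0 := by
          by_contra hpos
          push_neg at hpos
          nlinarith [mul_pos (hVpos xs) hpos]
        intro x
        linarith [hgm x]
      · push_neg at hcase
        intro x
        by_cases hxF : x ∈ F
        · have h5 : u x - ε * ψ x ≤ u xs - ε * ψ xs := hxsmax x hxF
          have hεB : 0 < ε * B := mul_pos hε hBpos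
          linarith
        · have := hout x hxF
          have hεB : 0 < ε * B := mul_pos hε hBpos
          linarith
    intro x
    by_contra hpos
    push_neg at hpos
    have hε : 0 < u x / (2 * ψ x) := by
      have := hψpos x
      positivity
    have hk := key _ hε x
    have heq : (u x / (2 * ψ x)) * ψ x = u x / 2 := by
      field_simp [(hψpos x).ne']
    rw [heq] at hk
    linarith
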